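/- Let m > 0 and let a₁, a₂ ∈ (−∞, 4m²), and let A(γ) := (a₁ − γ)·(a₂ − γ)·J(γ) for γ ∈ (−∞, 4m²). Then the derivative A′ of A is monotonically increasing on (−∞, 4m²) and its image is all of ℝ: for every b ∈ ℝ there exists γ < 4m² such that A′(γ) = b. -/

import Mathlib

/-!
Differentiating under the integral sign,
`A′(γ) = ∫ ρ(M) ((M - a₁)(M - a₂)/(M - γ)² - 1) dM`. For `M ≥ 4m²` the numerator is nonnegative
and `(M - γ)⁻²` increases with `γ`, so `A′` is monotone. As `γ → -∞` the bracket tends to `-1`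
uniformly on compacts while `∫ ρ` diverges (`ρ(M) ≍ 1/M`), so `A′ → -∞`. As `γ → 4m²` from below,
the threshold behaviour `ρ(M) ≍ √(M - 4m²)` against the `(M - γ)⁻²` singularity gives
`A′(γ) ≳ (4m² - γ)^(-1/2) → +∞`. Darboux's theorem then makes `A′` surjective.
-/

open MeasureTheory Set Real

/-- The spectral density `ρ(M) = (1/(16π²M))·√(1 − 4m²/M)` for `M ≥ 4m²`, and `0` otherwise. -/
noncomputable def rho (m M : ℝ) : ℝ :=
  if 4 * m ^ 2 ≤ M then (1 / (16 * Real.pi ^ 2 * M)) * Real.sqrt (1 - 4 * m ^ 2 / M) else 0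

/-- The Stieltjes transform `J(γ) = ∫_{4m²}^∞ ρ(M)/(M − γ) dM`. -/
noncomputable def Jfun (m γ : ℝ) : ℝ :=
  ∫ M in Set.Ici (4 * m ^ 2), rho m M / (M - γ)

open Filter Topology

lemma setIntegral_le_setIntegral_of_subset {α : Type*} [MeasurableSpace α] {μ : Measure α}
    {f g : α → ℝ} {s t : Set α} (hs : MeasurableSet s) (ht : MeasurableSet t) (hts : t ⊆ s)
    (hf : IntegrableOn f s μ) (hg : IntegrableOn g t μ) (hf₀ : ∀ x ∈ s, 0 ≤ f x)
    (hgf : ∀ x ∈ t, g x ≤ f x) :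
    ∫ x in t, g x ∂μ ≤ ∫ x in s, f x ∂μ :=
  (setIntegral_mono_on hg (hf.mono_set hts) ht hgf).trans
    (setIntegral_mono_set hf (ae_restrict_of_forall_mem hs hf₀) hts.eventuallyLE)

section StieltjesTransform

variable {f : ℝ → ℝ} {c γ : ℝ}

lemma integrableOn_div_sub_sq (hf : IntegrableOn (fun M => f M / (M - γ)) (Ici c)) (hγ : γ < c) :
    IntegrableOn (fun M => f M / (M - γ) ^ 2) (Ici c) := by
  have hbound : ∀ M ∈ Ici c, ‖(M - γ)⁻¹‖ ≤ (c - γ)⁻¹ := fun M (hM : c ≤ M) => by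
    rw [norm_inv, Real.norm_of_nonneg (by linarith)]
    exact inv_anti₀ (by linarith) (by linarith)
  refine IntegrableOn.congr_fun (Integrable.bdd_mul hf
    (measurable_id.sub_const γ).inv.aestronglyMeasurable
    (ae_restrict_of_forall_mem measurableSet_Ici hbound)) (fun M _ => ?_) measurableSet_Ici
  simp only [Pi.inv_apply, id]
  rw [inv_mul_eq_div, div_div, ← sq]

lemma hasDerivAt_integral_div_sub (hf : ∀ γ < c, IntegrableOn (fun M => f M / (M - γ)) (Ici c))
    (hγ : γ < c) :
    HasDerivAt (fun γ => ∫ M in Ici c, f M / (M - γ)) (∫ M in Ici c, f M / (M - γ) ^ 2) γ := by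
  set δ := (c - γ) / 2
  have hδ : 0 < δ := by simp only [δ]; linarith
  have hδc : γ + δ < c := by simp only [δ]; linarith
  have hball : ∀ γ' ∈ Metric.ball γ δ, γ' < γ + δ := fun γ' h => by
    rw [Metric.mem_ball, Real.dist_eq] at h
    linarith [(abs_lt.1 h).2]
  refine (hasDerivAt_integral_of_dominated_loc_of_deriv_le (Metric.ball_mem_nhds γ hδ)
    (F := fun γ M => f M / (M - γ)) (F' := fun γ M => f M / (M - γ) ^ 2)
    ((eventually_lt_nhds hγ).mono fun γ' h => (hf γ' h).aestronglyMeasurable) (hf γ hγ)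
    (integrableOn_div_sub_sq (hf γ hγ) hγ).aestronglyMeasurable
    (bound := fun M => ‖f M / (M - (γ + δ)) ^ 2‖) ?_
    (integrableOn_div_sub_sq (hf (γ + δ) hδc) hδc).norm ?_).2
  · refine ae_restrict_of_forall_mem measurableSet_Ici fun M (hM : c ≤ M) γ' hγ' => ?_
    have hγ'δ := hball γ' hγ'
    have hMγδ : 0 < M - (γ + δ) := by linarith
    rw [norm_div, norm_div, norm_pow, norm_pow, Real.norm_of_nonneg (by linarith : 0 ≤ M - γ'),
      Real.norm_of_nonneg (by linarith : 0 ≤ M - (γ + δ))]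
    gcongr
  · refine ae_restrict_of_forall_mem measurableSet_Ici fun M (hM : c ≤ M) γ' hγ' => ?_
    have hne : M - γ' ≠ 0 := by linarith [hball γ' hγ']
    have := ((hasDerivAt_id γ').const_sub M).inv hne |>.const_mul (f M)
    simpa [div_eq_mul_inv] using this

end StieltjesTransform

section Rho

variable {m M : ℝ}

lemma rho_of_le (h : 4 * m ^ 2 ≤ M) :
    rho m M = 1 / (16 * π ^ 2 * M) * √(1 - 4 * m ^ 2 / M) :=
  if_pos h

lemma rho_nonneg (m M : ℝ) : 0 ≤ rho m M := by
  unfold rho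
  split_ifs with h
  · have : 0 ≤ M := (by positivity : (0 : ℝ) ≤ 4 * m ^ 2).trans h
    positivity
  · rfl

lemma measurable_rho (m : ℝ) : Measurable (rho m) :=
  Measurable.ite (measurableSet_le measurable_const measurable_id) (by fun_prop) measurable_const

lemma rho_le (hM : 0 ≤ M) : rho m M ≤ 1 / (16 * π ^ 2 * M) := by
  unfold rho
  split_ifs with h
  · refine mul_le_of_le_one_right (by positivity) (Real.sqrt_le_one.2 ?_)
    have : 0 ≤ 4 * m ^ 2 / M := by positivity
    linarith
  · positivity

lemma one_div_le_rho (hm : 0 < m) (hM : 2 * (4 * m ^ 2) ≤ M) :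
    1 / (32 * π ^ 2 * M) ≤ rho m M := by
  have hc : 0 < 4 * m ^ 2 := by positivity
  have hM0 : 0 < M := by linarith
  have hsqrt : 1 / 2 ≤ √(1 - 4 * m ^ 2 / M) := by
    have : 4 * m ^ 2 / M ≤ 1 / 2 := by rw [div_le_iff₀ hM0]; linarith
    rw [Real.le_sqrt (by norm_num) (by linarith)]
    nlinarith
  calc 1 / (32 * π ^ 2 * M) = 1 / (16 * π ^ 2 * M) * (1 / 2) := by field_simp; ring
    _ ≤ rho m M := by rw [rho_of_le (by linarith)]; gcongr

lemma sqrt_sub_div_le_rho (hm : 0 < m) (h₁ : 4 * m ^ 2 ≤ M) (h₂ : M ≤ 4 * m ^ 2 + 1) :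
    √(M - 4 * m ^ 2) / (16 * π ^ 2 * (4 * m ^ 2 + 1) * √(4 * m ^ 2 + 1)) ≤ rho m M := by
  have hM0 : 0 < M := lt_of_lt_of_le (by positivity) h₁
  calc √(M - 4 * m ^ 2) / (16 * π ^ 2 * (4 * m ^ 2 + 1) * √(4 * m ^ 2 + 1))
      ≤ √(M - 4 * m ^ 2) / (16 * π ^ 2 * M * √M) := by gcongr
    _ = rho m M := by
      rw [rho_of_le h₁, show 1 - 4 * m ^ 2 / M = (M - 4 * m ^ 2) / M by field_simp,
        Real.sqrt_div (by linarith)]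
      field_simp

lemma continuousOn_rho (hm : 0 < m) : ContinuousOn (rho m) (Ici (4 * m ^ 2)) := by
  have hc : 0 < 4 * m ^ 2 := by positivity
  refine ContinuousOn.congr ?_ fun M (hM : _ ≤ M) => rho_of_le hM
  have : ∀ M ∈ Ici (4 * m ^ 2), 16 * π ^ 2 * M ≠ 0 ∧ M ≠ 0 := fun M (hM : _ ≤ M) =>
    ⟨by have := hc.trans_le hM; positivity, by linarith⟩
  fun_prop (disch := grind)

lemma not_integrableOn_rho (hm : 0 < m) : ¬ IntegrableOn (rho m) (Ioi (2 * (4 * m ^ 2))) :=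
  fun h => not_integrableOn_Ioi_inv <| (h.const_mul (32 * π ^ 2)).mono'
    measurable_inv.aestronglyMeasurable <| ae_restrict_of_forall_mem measurableSet_Ioi
      fun M (hM : _ < M) => by
        have hM0 : 0 < M := lt_trans (by positivity) hM
        rw [norm_inv, norm_of_nonneg hM0.le]
        calc M⁻¹ = 32 * π ^ 2 * (1 / (32 * π ^ 2 * M)) := by field_simp
          _ ≤ 32 * π ^ 2 * rho m M := by gcongr; exact one_div_le_rho hm hM.le

lemma exists_le_setIntegral_rho (hm : 0 < m) (B : ℝ) :
    ∃ T, B ≤ ∫ M in Icc (4 * m ^ 2) T, rho m M := by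
  by_contra! h
  have hint (T : ℝ) : IntegrableOn (rho m) (Ioc (4 * m ^ 2) T) :=
    ((continuousOn_rho hm).mono Icc_subset_Ici_self).integrableOn_Icc.mono_set Ioc_subset_Icc_self
  refine not_integrableOn_rho hm <| IntegrableOn.mono_set
    (integrableOn_Ioi_of_intervalIntegral_norm_bounded B _ hint tendsto_id
      ((eventually_ge_atTop (4 * m ^ 2)).mono fun T hT => ?_)) (Ioi_subset_Ioi (by nlinarith))
  simp_rw [norm_of_nonneg (rho_nonneg m _)]
  rw [intervalIntegral.integral_of_le hT, ← integral_Icc_eq_integral_Ioc]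
  exact (h T).le

end Rho

noncomputable def Aprime (m a₁ a₂ γ : ℝ) : ℝ :=
  ∫ M in Ici (4 * m ^ 2), rho m M * ((M - a₁) * (M - a₂) / (M - γ) ^ 2 - 1)

section Aprime

variable {m a₁ a₂ γ : ℝ}

lemma integrableOn_rho_div_sub (hm : 0 < m) (hγ : γ < 4 * m ^ 2) :
    IntegrableOn (fun M => rho m M / (M - γ)) (Ici (4 * m ^ 2)) := by
  have hc : 0 < 4 * m ^ 2 := by positivity
  set K := 1 + |γ| / (4 * m ^ 2 - γ)
  have hK : IntegrableOn (fun M : ℝ => K / (16 * π ^ 2) * M ^ (-2 : ℝ)) (Ici (4 * m ^ 2)) :=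
    IntegrableOn.mono_set ((integrableOn_Ioi_rpow_of_lt (by norm_num) (half_pos hc)).const_mul _)
      (Ici_subset_Ioi.2 (half_lt_self hc))
  refine hK.mono' ((measurable_rho m).div (measurable_id.sub_const γ)).aestronglyMeasurable
    (ae_restrict_of_forall_mem measurableSet_Ici fun M (hM : _ ≤ M) => ?_)
  have hM0 : 0 < M := hc.trans_le hM
  have hMγ : 0 < M - γ := by linarith
  have hratio : M ≤ K * (M - γ) := by
    have : |γ| * (4 * m ^ 2 - γ) ≤ |γ| * (M - γ) := by gcongr
    have : |γ| ≤ |γ| / (4 * m ^ 2 - γ) * (M - γ) := by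
      rw [div_mul_eq_mul_div, le_div_iff₀ (by linarith)]
      exact this
    linarith [le_abs_self γ]
  rw [norm_div, norm_of_nonneg (rho_nonneg m M), norm_of_nonneg hMγ.le, Real.rpow_neg hM0.le,
    Real.rpow_two]
  calc rho m M / (M - γ) ≤ 1 / (16 * π ^ 2 * M) / (M - γ) := by gcongr; exact rho_le hM0.le
    _ ≤ K / (16 * π ^ 2) * (M ^ 2)⁻¹ := by
      rw [div_le_iff₀ hMγ]
      field_simp
      nlinarith

lemma eqOn_Aprime_integrand (hγ : γ < 4 * m ^ 2) :
    EqOn (fun M => (2 * γ - a₁ - a₂) * (rho m M / (M - γ)) +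
        (a₁ - γ) * (a₂ - γ) * (rho m M / (M - γ) ^ 2))
      (fun M => rho m M * ((M - a₁) * (M - a₂) / (M - γ) ^ 2 - 1)) (Ici (4 * m ^ 2)) :=
  fun M (hM : _ ≤ M) => by
    have : M - γ ≠ 0 := by linarith
    field_simp
    ring

lemma integrableOn_Aprime_integrand (hm : 0 < m) (hγ : γ < 4 * m ^ 2) :
    IntegrableOn (fun M => rho m M * ((M - a₁) * (M - a₂) / (M - γ) ^ 2 - 1))
      (Ici (4 * m ^ 2)) :=
  IntegrableOn.congr_fun
    (((integrableOn_rho_div_sub hm hγ).const_mul _).add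
      ((integrableOn_div_sub_sq (integrableOn_rho_div_sub hm hγ) hγ).const_mul _))
    (eqOn_Aprime_integrand hγ) measurableSet_Ici

lemma hasDerivAt_Jfun (hm : 0 < m) (hγ : γ < 4 * m ^ 2) :
    HasDerivAt (Jfun m) (∫ M in Ici (4 * m ^ 2), rho m M / (M - γ) ^ 2) γ :=
  hasDerivAt_integral_div_sub (fun _ h => integrableOn_rho_div_sub hm h) hγ

lemma hasDerivAt_of_eq_mul_Jfun (hm : 0 < m) {A : ℝ → ℝ}
    (hA : ∀ γ < 4 * m ^ 2, A γ = (a₁ - γ) * (a₂ - γ) * Jfun m γ) (hγ : γ < 4 * m ^ 2) :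
    HasDerivAt A (Aprime m a₁ a₂ γ) γ := by
  have hP : HasDerivAt (fun γ => (a₁ - γ) * (a₂ - γ)) (2 * γ - a₁ - a₂) γ :=
    (((hasDerivAt_id' γ).const_sub a₁).fun_mul ((hasDerivAt_id' γ).const_sub a₂)).congr_deriv
      (by ring)
  have hAprime : (2 * γ - a₁ - a₂) * Jfun m γ +
      (a₁ - γ) * (a₂ - γ) * ∫ M in Ici (4 * m ^ 2), rho m M / (M - γ) ^ 2 =
      Aprime m a₁ a₂ γ := by
    rw [Jfun, ← integral_const_mul, ← integral_const_mul, ← integral_add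
      ((integrableOn_rho_div_sub hm hγ).const_mul _)
      ((integrableOn_div_sub_sq (integrableOn_rho_div_sub hm hγ) hγ).const_mul _)]
    exact setIntegral_congr_fun measurableSet_Ici (eqOn_Aprime_integrand hγ)
  refine hAprime ▸ (hP.mul (hasDerivAt_Jfun hm hγ)).congr_of_eventuallyEq ?_
  filter_upwards [Iio_mem_nhds hγ] with x hx
  exact hA x hx

lemma monotoneOn_Aprime (hm : 0 < m) (ha₁ : a₁ < 4 * m ^ 2) (ha₂ : a₂ < 4 * m ^ 2) :
    MonotoneOn (Aprime m a₁ a₂) (Iio (4 * m ^ 2)) := fun x (hx : x < _) y (hy : y < _) hxy =>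
  setIntegral_mono_on (integrableOn_Aprime_integrand hm hx) (integrableOn_Aprime_integrand hm hy)
    measurableSet_Ici fun M (hM : _ ≤ M) => by
      have : 0 ≤ (M - a₁) * (M - a₂) := mul_nonneg (by linarith) (by linarith)
      have : 0 < M - y := by linarith
      gcongr
      exact rho_nonneg m M

lemma half_setIntegral_rho_le_neg_Aprime (hm : 0 < m) (ha₁ : a₁ < 4 * m ^ 2)
    (ha₂ : a₂ < 4 * m ^ 2) {T : ℝ} (hγ₁ : γ ≤ a₁) (hγ₂ : γ ≤ a₂) (hγT : γ ≤ 2 * a₁ - T) :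
    (∫ M in Icc (4 * m ^ 2) T, rho m M) / 2 ≤ -Aprime m a₁ a₂ γ := by
  have hγ : γ < 4 * m ^ 2 := hγ₁.trans_lt ha₁
  rw [Aprime, ← integral_neg, ← integral_div]
  refine setIntegral_le_setIntegral_of_subset measurableSet_Ici measurableSet_Icc
    Icc_subset_Ici_self (integrableOn_Aprime_integrand hm hγ).neg
    (((continuousOn_rho hm).mono Icc_subset_Ici_self).integrableOn_Icc.div_const 2)
    (fun M (hM : _ ≤ M) => ?_) fun M hM => ?_
  · have : (M - a₁) * (M - a₂) / (M - γ) ^ 2 ≤ 1 := by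
      rw [div_le_one (by nlinarith)]
      nlinarith
    nlinarith [rho_nonneg m M]
  · have : (M - a₁) * (M - a₂) / (M - γ) ^ 2 ≤ 1 / 2 := by
      rw [div_le_iff₀ (by nlinarith [hM.1])]
      nlinarith [hM.1, hM.2]
    nlinarith [rho_nonneg m M]

lemma tendsto_Aprime_atBot (hm : 0 < m) (ha₁ : a₁ < 4 * m ^ 2) (ha₂ : a₂ < 4 * m ^ 2) :
    Tendsto (Aprime m a₁ a₂) atBot atBot := by
  refine tendsto_atBot.2 fun b => ?_
  obtain ⟨T, hT⟩ := exists_le_setIntegral_rho hm (-2 * b)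
  filter_upwards [eventually_le_atBot (min (min a₁ a₂) (2 * a₁ - T))] with γ hγ
  have := half_setIntegral_rho_le_neg_Aprime hm ha₁ ha₂ (hγ.trans (min_le_left _ _) |>.trans
    (min_le_left _ _)) (hγ.trans (min_le_left _ _) |>.trans (min_le_right _ _))
    (hγ.trans (min_le_right _ _))
  linarith

/-- Only the window `M ∈ [4m² + ε, 4m² + 2ε]`, `ε = 4m² - γ`, is used: there `ρ(M) ≳ √ε` and the
bracket is `≳ ε⁻²`, while the integrand is nonnegative elsewhere. -/
lemma le_Aprime_of_near_threshold (hm : 0 < m) (hγ₁ : a₁ ≤ γ) (hγ₂ : a₂ ≤ γ)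
    (hγ : γ < 4 * m ^ 2) (hγ' : 4 * m ^ 2 - 1 / 2 ≤ γ) :
    ((4 * m ^ 2 - a₁) * (4 * m ^ 2 - a₂) / 9 * (√(4 * m ^ 2 - γ))⁻¹ - 1) /
      (16 * π ^ 2 * (4 * m ^ 2 + 1) * √(4 * m ^ 2 + 1)) ≤ Aprime m a₁ a₂ γ := by
  set c := 4 * m ^ 2
  set den := 16 * π ^ 2 * (c + 1) * √(c + 1)
  set ε := c - γ
  have hε : 0 < ε := by simp only [ε]; linarith
  have hden : 0 < den := by positivity
  have hq₁ : ∀ M, c ≤ M → 1 ≤ (M - a₁) * (M - a₂) / (M - γ) ^ 2 := fun M hM => by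
    rw [one_le_div (by nlinarith)]
    nlinarith
  have hpt : ∀ M ∈ Icc (c + ε) (c + 2 * ε), √ε / den * ((c - a₁) * (c - a₂) / (9 * ε ^ 2) - 1)
      ≤ rho m M * ((M - a₁) * (M - a₂) / (M - γ) ^ 2 - 1) := by
    intro M ⟨hM₁, hM₂⟩
    have hMγ : 0 < M - γ := by simp only [ε] at hM₁; linarith
    have hρ : √ε / den ≤ rho m M :=
      le_trans (by gcongr; linarith) (sqrt_sub_div_le_rho hm (by linarith) (by linarith))
    have hq : (c - a₁) * (c - a₂) / (9 * ε ^ 2) ≤ (M - a₁) * (M - a₂) / (M - γ) ^ 2 := by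
      have : (M - γ) ^ 2 ≤ 9 * ε ^ 2 := by
        nlinarith [pow_le_pow_left₀ hMγ.le (by simp only [ε] at hM₂ ⊢; linarith : M - γ ≤ 3 * ε) 2]
      gcongr <;> nlinarith
    calc √ε / den * ((c - a₁) * (c - a₂) / (9 * ε ^ 2) - 1)
        ≤ √ε / den * ((M - a₁) * (M - a₂) / (M - γ) ^ 2 - 1) := by gcongr
      _ ≤ _ := mul_le_mul_of_nonneg_right hρ (by linarith [hq₁ M (by linarith)])
  have hint := setIntegral_le_setIntegral_of_subset measurableSet_Ici measurableSet_Icc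
    (Icc_subset_Ici_iff (by linarith) |>.2 (by linarith)) (integrableOn_Aprime_integrand hm hγ)
    (integrableOn_const (by simp))
    (fun M (hM : c ≤ M) => mul_nonneg (rho_nonneg m M) (by linarith [hq₁ M hM])) hpt
  rw [setIntegral_const, Real.volume_real_Icc, smul_eq_mul,
    show c + 2 * ε - (c + ε) = ε by ring, max_eq_left hε.le] at hint
  refine le_trans ?_ hint
  have hsq : √ε ^ 2 = ε := sq_sqrt hε.le
  have hsqrt : 0 < √ε := sqrt_pos.2 hε
  have : ε ^ 2 ≤ √ε := by
    nlinarith [sqrt_le_one.2 (show ε ≤ 1 by simp only [ε]; linarith)]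
  rw [div_le_iff₀ hden]
  field_simp
  rw [hsq]
  nlinarith

lemma tendsto_Aprime_nhdsLT (hm : 0 < m) (ha₁ : a₁ < 4 * m ^ 2) (ha₂ : a₂ < 4 * m ^ 2) :
    Tendsto (Aprime m a₁ a₂) (𝓝[<] (4 * m ^ 2)) atTop := by
  set c := 4 * m ^ 2
  have hD : 0 < (c - a₁) * (c - a₂) / 9 := by
    have : 0 < c - a₁ := by linarith
    have : 0 < c - a₂ := by linarith
    positivity
  have hsub : Tendsto (fun γ => c - γ) (𝓝[<] c) (𝓝[>] 0) :=
    tendsto_nhdsWithin_iff.2 ⟨((continuous_sub_left c).tendsto' c 0 (sub_self c)).mono_left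
      nhdsWithin_le_nhds, eventually_nhdsWithin_of_forall fun γ (h : γ < c) => sub_pos.2 h⟩
  have hlim : Tendsto (fun γ => ((c - a₁) * (c - a₂) / 9 * (√(c - γ))⁻¹ - 1) /
      (16 * π ^ 2 * (c + 1) * √(c + 1))) (𝓝[<] c) atTop := by
    refine Tendsto.atTop_div_const (by positivity) (tendsto_atTop_add_const_right _ (-1) ?_)
    simp_rw [← sqrt_inv]
    exact (tendsto_sqrt_atTop.comp (tendsto_inv_nhdsGT_zero.comp hsub)).const_mul_atTop hD
  refine tendsto_atTop_mono' _ ?_ hlim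
  filter_upwards [Ioo_mem_nhdsLT (show max (max a₁ a₂) (c - 1 / 2) < c by
    simp only [max_lt_iff]; exact ⟨⟨ha₁, ha₂⟩, by linarith⟩)] with γ ⟨hlo, hγ⟩
  simp only [max_lt_iff] at hlo
  exact le_Aprime_of_near_threshold hm hlo.1.1.le hlo.1.2.le hγ hlo.2.le

end Aprime

theorem stmt_5 (m : ℝ) (hm : 0 < m) (a₁ a₂ : ℝ)
    (ha₁ : a₁ < 4 * m ^ 2) (ha₂ : a₂ < 4 * m ^ 2)
    (A : ℝ → ℝ) (hA : ∀ γ : ℝ, γ < 4 * m ^ 2 → A γ = (a₁ - γ) * (a₂ - γ) * Jfun m γ) :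
    MonotoneOn (deriv A) (Set.Iio (4 * m ^ 2)) ∧
    ∀ b : ℝ, ∃ γ : ℝ, γ < 4 * m ^ 2 ∧ deriv A γ = b := by
  have hA' : ∀ γ < 4 * m ^ 2, HasDerivAt A (Aprime m a₁ a₂ γ) γ :=
    fun γ hγ => hasDerivAt_of_eq_mul_Jfun hm hA hγ
  have hderiv : EqOn (Aprime m a₁ a₂) (deriv A) (Iio (4 * m ^ 2)) :=
    fun γ hγ => (hA' γ hγ).deriv.symm
  have hmono := monotoneOn_Aprime hm ha₁ ha₂
  refine ⟨hmono.congr hderiv, fun b => ?_⟩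
  obtain ⟨γ₁, hγ₁b, hγ₁⟩ := ((tendsto_Aprime_atBot hm ha₁ ha₂).eventually_lt_atBot b |>.and
    (eventually_lt_atBot (4 * m ^ 2))).exists
  obtain ⟨γ₂, hγ₂b, hγ₂⟩ := ((tendsto_Aprime_nhdsLT hm ha₁ ha₂).eventually_gt_atTop b |>.and
    self_mem_nhdsWithin).exists
  have h₁₂ : γ₁ ≤ γ₂ := le_of_not_ge fun h => (hmono hγ₂ hγ₁ h).not_gt (hγ₁b.trans hγ₂b)
  obtain ⟨γ, hγ, hγb⟩ := exists_hasDerivWithinAt_eq_of_gt_of_lt h₁₂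
    (fun x hx => (hA' x (hx.2.trans_lt hγ₂)).hasDerivWithinAt) hγ₁b hγ₂b
  exact ⟨γ, hγ.2.trans hγ₂, hderiv (hγ.2.trans hγ₂) ▸ hγb⟩
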